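/- Let P, F ⊆ ℝⁿ, let (V_P, C_P, R_P) be a generator for P and (V_F, C_F, R_F) be a generator for F, with F nonempty. Then the post-flow postf(P,F) = {x + δ•y | x ∈ P, y ∈ F, δ ≥ 0} is the union of two generated convex polyhedra: postf(P,F) = gen(V_P, C_P, R_P) ∪ gen(V_P ⊕ V_F, C_P ∪ V_P, R_P ∪ V_F ∪ C_F ∪ R_F), where ⊕ denotes Minkowski sum. -/
import Mathlib


open Finset Pointwise

/-- `gen V C R` is the set of points generated by proper vertices `V`,
closure points `C` and rays `R`. -/
noncomputable def gen {n : ℕ} (V C R : Finset (Fin n → ℝ)) : Set (Fin n → ℝ) :=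
  {x | ∃ α β γ : (Fin n → ℝ) → ℝ,
    (∀ v ∈ V, 0 ≤ α v) ∧ (∀ c ∈ C, 0 ≤ β c) ∧ (∀ r ∈ R, 0 ≤ γ r) ∧
    ((∑ v ∈ V, α v) + (∑ c ∈ C, β c) = 1) ∧
    (∃ v ∈ V, 0 < α v) ∧
    x = (∑ v ∈ V, α v • v) + (∑ c ∈ C, β c • c) + (∑ r ∈ R, γ r • r)}

/-- The positive post-flow of `P` with respect to `F`. -/
def posPostf {n : ℕ} (P F : Set (Fin n → ℝ)) : Set (Fin n → ℝ) :=
  {z | ∃ x ∈ P, ∃ y ∈ F, ∃ δ : ℝ, 0 < δ ∧ z = x + δ • y}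

/-- The post-flow of `P` with respect to `F`. -/
def postf {n : ℕ} (P F : Set (Fin n → ℝ)) : Set (Fin n → ℝ) :=
  {z | ∃ x ∈ P, ∃ y ∈ F, ∃ δ : ℝ, 0 ≤ δ ∧ z = x + δ • y}

lemma sum_ite_subset' {ι M : Type*} [AddCommMonoid M] [DecidableEq ι] {S T : Finset ι}
    (h : S ⊆ T) (f : ι → M) :
    (∑ p ∈ T, if p ∈ S then f p else 0) = ∑ p ∈ S, f p := by
  rw [Finset.sum_ite_mem, Finset.inter_eq_right.mpr h]

lemma sum_union_split' {ι M : Type*} [AddCommMonoid M] [DecidableEq ι] (A B : Finset ι)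
    (f : ι → M) :
    ∑ p ∈ A ∪ B, f p = ∑ p ∈ A, f p + ∑ p ∈ B, (if p ∈ A then 0 else f p) := by
  have h1 : ∑ p ∈ B, (if p ∈ A then 0 else f p) = ∑ p ∈ B \ A, f p := by
    rw [Finset.sdiff_eq_filter, Finset.sum_filter]
    exact Finset.sum_congr rfl fun p _ => by split_ifs with h <;> simp [h]
  rw [h1, ← Finset.sum_union (Finset.disjoint_sdiff), Finset.union_sdiff_self_eq_union]

lemma sum_fiber' {ι M : Type*} [AddCommMonoid M] [DecidableEq ι] (S T : Finset ι)
    (u : ι → ι) (hu : ∀ p ∈ S, u p ∈ T) (F : ι → M) :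
    (∑ v ∈ T, ∑ p ∈ S, if u p = v then F p else 0) = ∑ p ∈ S, F p := by
  rw [Finset.sum_comm]
  refine Finset.sum_congr rfl fun p hp => ?_
  rw [Finset.sum_ite_eq T (u p) (fun _ => F p)]
  exact if_pos (hu p hp)

lemma gen2_subset_postf {n : ℕ} (VP CP RP VF CF RF : Finset (Fin n → ℝ)) :
    gen (VP + VF) (CP ∪ VP) (RP ∪ VF ∪ CF ∪ RF) ⊆
      postf (gen VP CP RP) (gen VF CF RF) := by
  classical
  rintro z ⟨Ah, Bh, Gh, hAh, hBh, hGh, hsum, ⟨p₀, hp₀, hp₀pos⟩, hzeq⟩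
  have hex : ∀ p : (Fin n → ℝ), ∃ v w, p ∈ VP + VF → v ∈ VP ∧ w ∈ VF ∧ v + w = p := by
    intro p
    by_cases hp : p ∈ VP + VF
    · obtain ⟨v, hv, w, hw, hvweq⟩ := Finset.mem_add.mp hp
      exact ⟨v, w, fun _ => ⟨hv, hw, hvweq⟩⟩
    · exact ⟨0, 0, fun hq => absurd hq hp⟩
  choose vp wp hvw using hex
  have hvpmem : ∀ p ∈ VP + VF, vp p ∈ VP := fun p hp => (hvw p hp).1
  have hwpmem : ∀ p ∈ VP + VF, wp p ∈ VF := fun p hp => (hvw p hp).2.1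
  have hRPU : RP ⊆ RP ∪ VF ∪ CF ∪ RF := by intro q hq; simp [hq]
  have hVFU : VF ⊆ RP ∪ VF ∪ CF ∪ RF := by intro q hq; simp [hq]
  have hCFU : CF ⊆ RP ∪ VF ∪ CF ∪ RF := by intro q hq; simp [hq]
  have hRFU : RF ⊆ RP ∪ VF ∪ CF ∪ RF := by intro q hq; simp [hq]
  set g : (Fin n → ℝ) → ℝ := fun v => ∑ p ∈ VP + VF, if vp p = v then Ah p else 0 with hg_def
  set h : (Fin n → ℝ) → ℝ := fun w => ∑ p ∈ VP + VF, if wp p = w then Ah p else 0 with hh_def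
  set c1 : (Fin n → ℝ) → ℝ := fun w => if w ∈ RP then 0 else Gh w with hc1_def
  set c2 : (Fin n → ℝ) → ℝ := fun d => if d ∈ RP ∪ VF then 0 else Gh d with hc2_def
  set c3 : (Fin n → ℝ) → ℝ := fun s => if s ∈ RP ∪ VF ∪ CF then 0 else Gh s with hc3_def
  set A : ℝ := ∑ p ∈ VP + VF, Ah p with hA_def
  have hgnonneg : ∀ v, 0 ≤ g v := by
    intro v
    simp only [hg_def]
    refine Finset.sum_nonneg fun p hp => ?_
    split_ifs
    · exact hAh p hp
    · exact le_refl 0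
  have hhnonneg : ∀ w, 0 ≤ h w := by
    intro w
    simp only [hh_def]
    refine Finset.sum_nonneg fun p hp => ?_
    split_ifs
    · exact hAh p hp
    · exact le_refl 0
  have hc1nonneg : ∀ w ∈ VF, 0 ≤ c1 w := by
    intro w hw
    simp only [hc1_def]
    split_ifs
    · exact le_refl 0
    · exact hGh w (hVFU hw)
  have hc2nonneg : ∀ d ∈ CF, 0 ≤ c2 d := by
    intro d hd
    simp only [hc2_def]
    split_ifs
    · exact le_refl 0
    · exact hGh d (hCFU hd)
  have hc3nonneg : ∀ s ∈ RF, 0 ≤ c3 s := by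
    intro s hs
    simp only [hc3_def]
    split_ifs
    · exact le_refl 0
    · exact hGh s (hRFU hs)
  have hApos : 0 < A :=
    lt_of_lt_of_le hp₀pos (Finset.single_le_sum (fun p hp => hAh p hp) hp₀)
  set D : ℝ := A + ∑ w ∈ VF, c1 w + ∑ d ∈ CF, c2 d with hD_def
  have hDpos : 0 < D := by
    have h1 : 0 ≤ ∑ w ∈ VF, c1 w := Finset.sum_nonneg hc1nonneg
    have h2 : 0 ≤ ∑ d ∈ CF, c2 d := Finset.sum_nonneg hc2nonneg
    simp only [hD_def]; linarith
  have hDne : D ≠ 0 := ne_of_gt hDpos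
  have hgsum : ∑ v ∈ VP, g v = A := by
    simp only [hg_def, hA_def]
    exact sum_fiber' (VP + VF) VP vp hvpmem Ah
  have hhsum : ∑ w ∈ VF, h w = A := by
    simp only [hh_def, hA_def]
    exact sum_fiber' (VP + VF) VF wp hwpmem Ah
  have hgvec : ∑ v ∈ VP, g v • v = ∑ p ∈ VP + VF, Ah p • vp p := by
    rw [← sum_fiber' (VP + VF) VP vp hvpmem (fun p => Ah p • vp p)]
    refine Finset.sum_congr rfl fun v hv => ?_
    simp only [hg_def]
    rw [Finset.sum_smul]
    refine Finset.sum_congr rfl fun p hp => ?_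
    split_ifs with hc
    · rw [hc]
    · exact zero_smul _ _
  have hhvec : ∑ w ∈ VF, h w • w = ∑ p ∈ VP + VF, Ah p • wp p := by
    rw [← sum_fiber' (VP + VF) VF wp hwpmem (fun p => Ah p • wp p)]
    refine Finset.sum_congr rfl fun w hw => ?_
    simp only [hh_def]
    rw [Finset.sum_smul]
    refine Finset.sum_congr rfl fun p hp => ?_
    split_ifs with hc
    · rw [hc]
    · exact zero_smul _ _
  set x : Fin n → ℝ := (∑ v ∈ VP, (g v + (if v ∈ CP then 0 else Bh v)) • v) +
    (∑ c ∈ CP, Bh c • c) + (∑ r ∈ RP, Gh r • r) with hx_def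
  set y : Fin n → ℝ := (∑ w ∈ VF, (D⁻¹ * (h w + c1 w)) • w) +
    (∑ d ∈ CF, (D⁻¹ * c2 d) • d) + (∑ s ∈ RF, (D⁻¹ * c3 s) • s) with hy_def
  refine ⟨x, ?_, y, ?_, D, hDpos.le, ?_⟩
  · -- x ∈ gen VP CP RP
    refine ⟨fun v => g v + (if v ∈ CP then 0 else Bh v), Bh, Gh, ?_, ?_, ?_, ?_, ?_, hx_def⟩
    · intro v hv
      refine add_nonneg (hgnonneg v) ?_
      split_ifs with hc
      · exact le_refl 0
      · exact hBh v (Finset.mem_union_right _ hv)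
    · exact fun c hc => hBh c (Finset.mem_union_left _ hc)
    · exact fun r hr => hGh r (hRPU hr)
    · have hsplit := sum_union_split' CP VP Bh
      rw [Finset.sum_add_distrib, hgsum]
      linarith [hsum]
    · refine ⟨vp p₀, hvpmem p₀ hp₀, ?_⟩
      have h1 : Ah p₀ ≤ g (vp p₀) := by
        have := Finset.single_le_sum (f := fun p => if vp p = vp p₀ then Ah p else 0)
          (fun p hp => by by_cases hc : vp p = vp p₀ <;> simp [hc, hAh p hp]) hp₀
        simpa [hg_def] using this
      have h2 : (0:ℝ) ≤ if vp p₀ ∈ CP then 0 else Bh (vp p₀) := by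
        split_ifs with hc
        · exact le_refl 0
        · exact hBh (vp p₀) (Finset.mem_union_right _ (hvpmem p₀ hp₀))
      dsimp only
      linarith
  · -- y ∈ gen VF CF RF
    refine ⟨fun w => D⁻¹ * (h w + c1 w), fun d => D⁻¹ * c2 d, fun s => D⁻¹ * c3 s,
      ?_, ?_, ?_, ?_, ?_, hy_def⟩
    · exact fun w hw => mul_nonneg (inv_nonneg.mpr hDpos.le)
        (add_nonneg (hhnonneg w) (hc1nonneg w hw))
    · exact fun d hd => mul_nonneg (inv_nonneg.mpr hDpos.le) (hc2nonneg d hd)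
    · exact fun s hs => mul_nonneg (inv_nonneg.mpr hDpos.le) (hc3nonneg s hs)
    · rw [← Finset.mul_sum, ← Finset.mul_sum, ← mul_add, Finset.sum_add_distrib, hhsum]
      rw [← hD_def]
      exact inv_mul_cancel₀ hDne
    · refine ⟨wp p₀, hwpmem p₀ hp₀, ?_⟩
      have h1 : Ah p₀ ≤ h (wp p₀) := by
        have := Finset.single_le_sum (f := fun p => if wp p = wp p₀ then Ah p else 0)
          (fun p hp => by by_cases hc : wp p = wp p₀ <;> simp [hc, hAh p hp]) hp₀
        simpa [hh_def] using this
      have h2 : 0 ≤ c1 (wp p₀) := hc1nonneg _ (hwpmem p₀ hp₀)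
      exact mul_pos (inv_pos.mpr hDpos) (by linarith)
  · -- z = x + D • y
    have hDy : D • y = (∑ w ∈ VF, (h w + c1 w) • w) + (∑ d ∈ CF, c2 d • d) +
        (∑ s ∈ RF, c3 s • s) := by
      rw [hy_def, smul_add, smul_add, Finset.smul_sum, Finset.smul_sum, Finset.smul_sum]
      simp only [smul_smul, ← mul_assoc, mul_inv_cancel₀ hDne, one_mul]
    have E1 : ∑ p ∈ VP + VF, Ah p • p =
        (∑ p ∈ VP + VF, Ah p • vp p) + ∑ p ∈ VP + VF, Ah p • wp p := by
      rw [← Finset.sum_add_distrib]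
      refine Finset.sum_congr rfl fun p hp => ?_
      rw [← smul_add, (hvw p hp).2.2]
    have E2 : ∑ p ∈ CP ∪ VP, Bh p • p =
        (∑ c ∈ CP, Bh c • c) + ∑ v ∈ VP, (if v ∈ CP then 0 else Bh v • v) :=
      sum_union_split' CP VP (fun p => Bh p • p)
    have E3 : ∑ p ∈ RP ∪ VF ∪ CF ∪ RF, Gh p • p =
        (∑ r ∈ RP, Gh r • r) + (∑ w ∈ VF, if w ∈ RP then 0 else Gh w • w) +
        (∑ d ∈ CF, if d ∈ RP ∪ VF then 0 else Gh d • d) +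
        (∑ s ∈ RF, if s ∈ RP ∪ VF ∪ CF then 0 else Gh s • s) := by
      rw [sum_union_split' (RP ∪ VF ∪ CF) RF (fun p => Gh p • p),
        sum_union_split' (RP ∪ VF) CF (fun p => Gh p • p),
        sum_union_split' RP VF (fun p => Gh p • p)]
    have X1 : ∑ v ∈ VP, (g v + (if v ∈ CP then 0 else Bh v)) • v =
        (∑ p ∈ VP + VF, Ah p • vp p) + ∑ v ∈ VP, (if v ∈ CP then 0 else Bh v • v) := by
      rw [← hgvec, ← Finset.sum_add_distrib]
      refine Finset.sum_congr rfl fun v hv => ?_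
      rw [add_smul]
      congr 1
      split_ifs <;> simp
    have Y1 : ∑ w ∈ VF, (h w + c1 w) • w =
        (∑ p ∈ VP + VF, Ah p • wp p) + ∑ w ∈ VF, (if w ∈ RP then 0 else Gh w • w) := by
      rw [← hhvec, ← Finset.sum_add_distrib]
      refine Finset.sum_congr rfl fun w hw => ?_
      rw [add_smul]
      congr 1
      simp only [hc1_def]
      split_ifs <;> simp
    have Y2 : ∑ d ∈ CF, c2 d • d = ∑ d ∈ CF, (if d ∈ RP ∪ VF then 0 else Gh d • d) := by
      refine Finset.sum_congr rfl fun d hd => ?_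
      simp only [hc2_def]
      split_ifs <;> simp
    have Y3 : ∑ s ∈ RF, c3 s • s =
        ∑ s ∈ RF, (if s ∈ RP ∪ VF ∪ CF then 0 else Gh s • s) := by
      refine Finset.sum_congr rfl fun s hs => ?_
      simp only [hc3_def]
      split_ifs <;> simp
    rw [hzeq, hDy, hx_def, E1, E2, E3, X1, Y1, Y2, Y3]
    abel

lemma gen2_mem {n : ℕ} (VP CP RP VF CF RF : Finset (Fin n → ℝ))
    (x y : Fin n → ℝ) (hx : x ∈ gen VP CP RP) (hy : y ∈ gen VF CF RF)
    (δ : ℝ) (hδpos : 0 < δ) :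
    x + δ • y ∈ gen (VP + VF) (CP ∪ VP) (RP ∪ VF ∪ CF ∪ RF) := by
  classical
  obtain ⟨α, β, γ, hα, hβ, hγ, hsum, ⟨v₀, hv₀, hv₀pos⟩, hxeq⟩ := hx
  obtain ⟨α', β', γ', hα', hβ', hγ', hsum', ⟨w₀, hw₀, hw₀pos⟩, hyeq⟩ := hy
  set t := min (α v₀) (δ * α' w₀) with ht
  have htpos : 0 < t := lt_min hv₀pos (mul_pos hδpos hw₀pos)
  have ht1 : t ≤ α v₀ := min_le_left _ _
  have ht2 : t ≤ δ * α' w₀ := min_le_right _ _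
  have hmem : v₀ + w₀ ∈ VP + VF := Finset.add_mem_add hv₀ hw₀
  refine ⟨fun p => if p = v₀ + w₀ then t else 0,
    fun p => (if p ∈ CP then β p else 0) +
      (if p ∈ VP then α p - (if p = v₀ then t else 0) else 0),
    fun p => (if p ∈ RP then γ p else 0) +
      (if p ∈ VF then δ * α' p - (if p = w₀ then t else 0) else 0) +
      (if p ∈ CF then δ * β' p else 0) + (if p ∈ RF then δ * γ' p else 0),
    ?_, ?_, ?_, ?_, ?_, ?_⟩
  · intro p _
    dsimp only
    split_ifs
    exacts [htpos.le, le_refl 0]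
  · intro p _
    dsimp only
    have h1 : (0:ℝ) ≤ if p ∈ CP then β p else 0 := by
      split_ifs with h; exacts [hβ p h, le_refl 0]
    have h2 : (0:ℝ) ≤ if p ∈ VP then α p - (if p = v₀ then t else 0) else 0 := by
      split_ifs with h h'
      · subst h'; linarith
      · simpa using hα p h
      · exact le_refl 0
    linarith
  · intro p _
    dsimp only
    have h1 : (0:ℝ) ≤ if p ∈ RP then γ p else 0 := by
      split_ifs with h; exacts [hγ p h, le_refl 0]
    have h2 : (0:ℝ) ≤ if p ∈ VF then δ * α' p - (if p = w₀ then t else 0) else 0 := by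
      split_ifs with h h'
      · subst h'; linarith
      · have := mul_nonneg hδpos.le (hα' p h); linarith
      · exact le_refl 0
    have h3 : (0:ℝ) ≤ if p ∈ CF then δ * β' p else 0 := by
      split_ifs with h
      · exact mul_nonneg hδpos.le (hβ' p h)
      · exact le_refl 0
    have h4 : (0:ℝ) ≤ if p ∈ RF then δ * γ' p else 0 := by
      split_ifs with h
      · exact mul_nonneg hδpos.le (hγ' p h)
      · exact le_refl 0
    linarith
  · -- sums equal 1
    dsimp only
    rw [Finset.sum_ite_eq' (VP + VF) (v₀ + w₀) (fun _ => t), if_pos hmem]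
    rw [Finset.sum_add_distrib,
      sum_ite_subset' Finset.subset_union_left (fun p => β p),
      sum_ite_subset' Finset.subset_union_right
        (fun p => α p - (if p = v₀ then t else 0)),
      Finset.sum_sub_distrib,
      Finset.sum_ite_eq' VP v₀ (fun _ => t), if_pos hv₀]
    linarith
  · exact ⟨v₀ + w₀, hmem, by simpa using htpos⟩
  · -- point equation
    dsimp only
    have e1 : (∑ p ∈ VP + VF, (if p = v₀ + w₀ then t else 0) • p)
        = t • v₀ + t • w₀ := by
      have : ∀ p ∈ VP + VF, (if p = v₀ + w₀ then t else 0) • p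
          = if p = v₀ + w₀ then t • (v₀ + w₀) else 0 := by
        intro p _; split_ifs with h
        · rw [h]
        · exact zero_smul _ _
      rw [Finset.sum_congr rfl this,
        Finset.sum_ite_eq' (VP + VF) (v₀ + w₀) (fun _ => t • (v₀ + w₀)),
        if_pos hmem, smul_add]
    have e2 : (∑ p ∈ CP ∪ VP,
        ((if p ∈ CP then β p else 0) +
          (if p ∈ VP then α p - (if p = v₀ then t else 0) else 0)) • p)
        = (∑ c ∈ CP, β c • c) + ((∑ v ∈ VP, α v • v) - t • v₀) := by
      have : ∀ p ∈ CP ∪ VP,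
          ((if p ∈ CP then β p else 0) +
            (if p ∈ VP then α p - (if p = v₀ then t else 0) else 0)) • p
          = (if p ∈ CP then β p • p else 0) +
            (if p ∈ VP then α p • p - (if p = v₀ then t • v₀ else 0) else 0) := by
        intro p _
        rw [add_smul]
        congr 1
        · split_ifs <;> simp
        · split_ifs with h h' <;> simp_all [sub_smul]
      rw [Finset.sum_congr rfl this, Finset.sum_add_distrib,
        sum_ite_subset' Finset.subset_union_left (fun p => β p • p),
        sum_ite_subset' Finset.subset_union_right
          (fun p => α p • p - (if p = v₀ then t • v₀ else 0)),
        Finset.sum_sub_distrib,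
        Finset.sum_ite_eq' VP v₀ (fun _ => t • v₀), if_pos hv₀]
    have e3 : (∑ p ∈ RP ∪ VF ∪ CF ∪ RF,
        ((if p ∈ RP then γ p else 0) +
          (if p ∈ VF then δ * α' p - (if p = w₀ then t else 0) else 0) +
          (if p ∈ CF then δ * β' p else 0) + (if p ∈ RF then δ * γ' p else 0)) • p)
        = (∑ r ∈ RP, γ r • r) + ((∑ w ∈ VF, (δ * α' w) • w) - t • w₀) +
          (∑ d ∈ CF, (δ * β' d) • d) + (∑ s ∈ RF, (δ * γ' s) • s) := by
      have hRP : RP ⊆ RP ∪ VF ∪ CF ∪ RF := by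
        intro p hp; simp [hp]
      have hVF : VF ⊆ RP ∪ VF ∪ CF ∪ RF := by
        intro p hp; simp [hp]
      have hCF : CF ⊆ RP ∪ VF ∪ CF ∪ RF := by
        intro p hp; simp [hp]
      have hRF : RF ⊆ RP ∪ VF ∪ CF ∪ RF := by
        intro p hp; simp [hp]
      have : ∀ p ∈ RP ∪ VF ∪ CF ∪ RF,
          ((if p ∈ RP then γ p else 0) +
            (if p ∈ VF then δ * α' p - (if p = w₀ then t else 0) else 0) +
            (if p ∈ CF then δ * β' p else 0) + (if p ∈ RF then δ * γ' p else 0)) • p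
          = (if p ∈ RP then γ p • p else 0) +
            (if p ∈ VF then (δ * α' p) • p - (if p = w₀ then t • w₀ else 0) else 0) +
            (if p ∈ CF then (δ * β' p) • p else 0) +
            (if p ∈ RF then (δ * γ' p) • p else 0) := by
        intro p _
        rw [add_smul, add_smul, add_smul]
        congr 2
        congr 2
        · split_ifs <;> simp
        · split_ifs with h h' <;> simp_all [sub_smul]
        · split_ifs <;> simp
        · split_ifs <;> simp
      rw [Finset.sum_congr rfl this, Finset.sum_add_distrib, Finset.sum_add_distrib,
        Finset.sum_add_distrib,
        sum_ite_subset' hRP (fun p => γ p • p),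
        sum_ite_subset' hVF (fun p => (δ * α' p) • p - (if p = w₀ then t • w₀ else 0)),
        sum_ite_subset' hCF (fun p => (δ * β' p) • p),
        sum_ite_subset' hRF (fun p => (δ * γ' p) • p),
        Finset.sum_sub_distrib,
        Finset.sum_ite_eq' VF w₀ (fun _ => t • w₀), if_pos hw₀]
    rw [e1, e2, e3, hxeq, hyeq]
    rw [smul_add, smul_add, Finset.smul_sum, Finset.smul_sum, Finset.smul_sum]
    simp only [smul_smul]
    abel


theorem postflow_eq_union_of_gens {n : ℕ} (P F : Set (Fin n → ℝ))
    (VP CP RP VF CF RF : Finset (Fin n → ℝ))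
    (hP : P = gen VP CP RP) (hF : F = gen VF CF RF) (hne : F.Nonempty) :
    postf P F = gen VP CP RP ∪ gen (VP + VF) (CP ∪ VP) (RP ∪ VF ∪ CF ∪ RF) := by
  apply Set.Subset.antisymm
  · rintro z ⟨x, hx, y, hy, δ, hδ, rfl⟩
    rcases hδ.lt_or_eq with hpos | heq
    · right
      rw [hP] at hx
      rw [hF] at hy
      exact gen2_mem VP CP RP VF CF RF x y hx hy δ hpos
    · left
      rw [← heq, zero_smul, add_zero]
      exact hP ▸ hx
  · intro z hz
    rcases hz with hz | hz
    · obtain ⟨y, hy⟩ := hne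
      exact ⟨z, hP ▸ hz, y, hy, 0, le_refl 0, by rw [zero_smul, add_zero]⟩
    · rw [hP, hF]
      exact gen2_subset_postf VP CP RP VF CF RF hz
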